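/- Let G be the star on n vertices with centre c, and let f : V_G → ℝ satisfy f(c) = 0, f nonzero at every leaf, with m₊ leaves where f > 0 and m₋ leaves where f < 0 (m₊ + m₋ = n − 1, both positive). Then the Urschel number of f equals 1 + min(m₊, m₋). -/

import Mathlib

open SimpleGraph

/-- The number of strong nodal domains of `f`: connected components of the subgraph
induced on the positive set plus those of the subgraph induced on the negative set. -/
noncomputable def SND {V : Type*} (G : SimpleGraph V) (f : V → ℝ) : ℕ :=
  Nat.card ((G.induce {v | 0 < f v}).ConnectedComponent) +
  Nat.card ((G.induce {v | f v < 0}).ConnectedComponent)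

/-- The number of weak nodal domains of `f`: connected components of the subgraph
induced on `{f ≥ 0}` (resp. `{f ≤ 0}`) containing at least one vertex where `f ≠ 0`. -/
noncomputable def WND {V : Type*} (G : SimpleGraph V) (f : V → ℝ) : ℕ :=
  Nat.card {c : (G.induce {v | 0 ≤ f v}).ConnectedComponent //
      ∃ v : {v | 0 ≤ f v}, (G.induce {v | 0 ≤ f v}).connectedComponentMk v = c ∧ f v.1 ≠ 0} +
  Nat.card {c : (G.induce {v | f v ≤ 0}).ConnectedComponent //
      ∃ v : {v | f v ≤ 0}, (G.induce {v | f v ≤ 0}).connectedComponentMk v = c ∧ f v.1 ≠ 0}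

/-- `g` is a partial signing of `f`: strictly positive where `f` is positive and strictly
negative where `f` is negative. -/
def IsPartialSigning {V : Type*} (f g : V → ℝ) : Prop :=
  ∀ v, (0 < f v → 0 < g v) ∧ (f v < 0 → g v < 0)

/-- `g` is a signing of `f`: a nowhere-zero partial signing of `f`. -/
def IsSigning {V : Type*} (f g : V → ℝ) : Prop :=
  (∀ v, g v ≠ 0) ∧ IsPartialSigning f g

/-- The Urschel number of `f`: the minimum number of strong nodal domains over all
signings of `f`. -/
noncomputable def UN {V : Type*} (G : SimpleGraph V) (f : V → ℝ) : ℕ :=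
  sInf (SND G '' {g | IsSigning f g})

/-- The star graph with centre `none` and `m` leaves `some i`. -/
def starGraph (m : ℕ) : SimpleGraph (Option (Fin m)) where
  Adj u v := (u = none ∨ v = none) ∧ u ≠ v
  symm := ⟨fun u v h => ⟨h.1.symm, h.2.symm⟩⟩
  loopless := ⟨fun u h => h.2 rfl⟩

/-!
A signing of `f` agrees in sign with `f` at every leaf and only chooses a sign at the centre.
The centre, being adjacent to every leaf, merges all leaves of its own sign into a single
strong nodal domain, while the leaves of the opposite sign are pairwise non-adjacent and stay
isolated. So the signings realise exactly the two counts `1 + m₋` and `m₊ + 1`.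
-/

open Function

theorem SimpleGraph.card_connectedComponent_bot (V : Type*) :
    Nat.card (⊥ : SimpleGraph V).ConnectedComponent = Nat.card V :=
  (Nat.card_eq_of_bijective _
    ⟨fun _ _ h => reachable_bot.mp (ConnectedComponent.eq.mp h), fun c => c.exists_rep⟩).symm

theorem SimpleGraph.Preconnected.card_connectedComponent {V : Type*} [Nonempty V]
    {G : SimpleGraph V} (h : G.Preconnected) : Nat.card G.ConnectedComponent = 1 :=
  have := h.subsingleton_connectedComponent
  Nat.card_unique

section Star

variable {m : ℕ} {S : Set (Option (Fin m))}

theorem starGraph_induce_preconnected (hS : none ∈ S) :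
    ((_root_.starGraph m).induce S).Preconnected := by
  have toCentre : ∀ v : S, ((_root_.starGraph m).induce S).Reachable v ⟨none, hS⟩ := by
    rintro ⟨_ | i, hv⟩
    · rfl
    · exact Adj.reachable (⟨Or.inr rfl, Option.some_ne_none i⟩ : (_root_.starGraph m).Adj _ _)
  exact fun u v => (toCentre u).trans (toCentre v).symm

theorem starGraph_induce_eq_bot (hS : none ∉ S) : (_root_.starGraph m).induce S = ⊥ := by
  refine eq_bot_iff_forall_not_adj.mpr ?_
  rintro ⟨u, hu⟩ ⟨v, hv⟩ ⟨rfl | rfl, -⟩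
  exacts [hS hu, hS hv]

theorem card_connectedComponent_starGraph_induce_of_none_mem (hS : none ∈ S) :
    Nat.card ((_root_.starGraph m).induce S).ConnectedComponent = 1 :=
  have : Nonempty S := ⟨⟨none, hS⟩⟩
  (starGraph_induce_preconnected hS).card_connectedComponent

theorem card_connectedComponent_starGraph_induce_of_none_notMem (hS : none ∉ S) :
    Nat.card ((_root_.starGraph m).induce S).ConnectedComponent = Nat.card (some ⁻¹' S) := by
  have hS_range : S ⊆ Set.range some := fun _ hv =>
    Option.ne_none_iff_exists.mp (ne_of_mem_of_not_mem hv hS)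
  rw [starGraph_induce_eq_bot hS, card_connectedComponent_bot,
    ← Nat.card_image_of_injective (Option.some_injective _) (some ⁻¹' S),
    Set.image_preimage_eq_of_subset hS_range]

end Star

theorem SND_neg {V : Type*} (G : SimpleGraph V) (g : V → ℝ) : SND G (-g) = SND G g := by
  have hpos : {v | 0 < (-g) v} = {v | g v < 0} := by ext; simp
  have hneg : {v | (-g) v < 0} = {v | 0 < g v} := by ext; simp
  rw [SND, SND, hpos, hneg, add_comm]

theorem SND_starGraph_of_pos {m : ℕ} {g : Option (Fin m) → ℝ} (h : 0 < g none) :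
    SND (_root_.starGraph m) g = 1 + Nat.card {i : Fin m // g (some i) < 0} := by
  rw [SND, card_connectedComponent_starGraph_induce_of_none_mem (S := {v | 0 < g v}) h,
    card_connectedComponent_starGraph_induce_of_none_notMem (S := {v | g v < 0}) h.not_gt]
  rfl

theorem SND_starGraph_of_neg {m : ℕ} {g : Option (Fin m) → ℝ} (h : g none < 0) :
    SND (_root_.starGraph m) g = Nat.card {i : Fin m // 0 < g (some i)} + 1 := by
  rw [← SND_neg, SND_starGraph_of_pos (by simpa using h), add_comm]
  simp only [Pi.neg_apply, neg_lt_zero]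

section Signing

variable {V : Type*} {f g : V → ℝ} {v : V}

theorem IsPartialSigning.pos_iff (hg : IsPartialSigning f g) (hv : f v ≠ 0) :
    0 < g v ↔ 0 < f v := by
  rcases hv.lt_or_gt with h | h
  · exact iff_of_false ((hg v).2 h).not_gt h.not_gt
  · exact iff_of_true ((hg v).1 h) h

theorem IsPartialSigning.neg_iff (hg : IsPartialSigning f g) (hv : f v ≠ 0) :
    g v < 0 ↔ f v < 0 := by
  rcases hv.lt_or_gt with h | h
  · exact iff_of_true ((hg v).2 h) h
  · exact iff_of_false ((hg v).1 h).not_gt h.not_gt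

theorem isSigning_update [DecidableEq V] (hv : f v = 0) (hf : ∀ w, w ≠ v → f w ≠ 0) {a : ℝ}
    (ha : a ≠ 0) : IsSigning f (update f v a) := by
  refine ⟨fun w => ?_, fun w => ?_⟩
  · rcases eq_or_ne w v with rfl | hw
    · simpa using ha
    · simpa [hw] using hf w hw
  · rcases eq_or_ne w v with rfl | hw
    · simp [hv]
    · simp [hw]

end Signing

theorem SND_starGraph_image_isSigning {m : ℕ} {f : Option (Fin m) → ℝ} (hc : f none = 0)
    (hl : ∀ i : Fin m, f (some i) ≠ 0) :
    SND (_root_.starGraph m) '' {g | IsSigning f g} =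
      {1 + Nat.card {i : Fin m // f (some i) < 0},
        Nat.card {i : Fin m // 0 < f (some i)} + 1} := by
  have hf : ∀ w, w ≠ none → f w ≠ 0 := by
    rintro (_ | i) hw
    exacts [absurd rfl hw, hl i]
  ext k
  constructor
  · rintro ⟨g, hg, rfl⟩
    rcases (hg.1 none).lt_or_gt with hneg | hpos
    · right
      rw [SND_starGraph_of_neg hneg]
      exact congrArg (· + 1)
        (Nat.card_congr (Equiv.subtypeEquivRight fun i => hg.2.pos_iff (hl i)))
    · left
      rw [SND_starGraph_of_pos hpos]
      exact congrArg (1 + ·)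
        (Nat.card_congr (Equiv.subtypeEquivRight fun i => hg.2.neg_iff (hl i)))
  · rintro (rfl | rfl)
    · refine ⟨update f none 1, isSigning_update hc hf one_ne_zero, ?_⟩
      rw [SND_starGraph_of_pos (by simp)]
      simp
    · refine ⟨update f none (-1), isSigning_update hc hf (by norm_num), ?_⟩
      rw [SND_starGraph_of_neg (by simp)]
      simp

theorem stmt_3_general (m : ℕ)
    (f : Option (Fin m) → ℝ) (hc : f none = 0) (hl : ∀ i : Fin m, f (some i) ≠ 0)
    (mp mm : ℕ)
    (hmp : mp = Nat.card {i : Fin m // 0 < f (some i)})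
    (hmm : mm = Nat.card {i : Fin m // f (some i) < 0}) :
    UN (_root_.starGraph m) f = 1 + min mp mm := by
  rw [UN, SND_starGraph_image_isSigning hc hl, csInf_pair, ← hmp, ← hmm]
  omega

/-- for a function on the star on `n = m + 1` vertices vanishing at the
centre, nonzero at all leaves, positive at `mp` leaves and negative at `mm` leaves
(both positive, `mp + mm = n - 1`), the Urschel number is `1 + min mp mm`. -/
theorem stmt_3 (n m : ℕ) (hnm : n = m + 1) (hn : 3 ≤ n)
    (f : Option (Fin m) → ℝ) (hc : f none = 0) (hl : ∀ i : Fin m, f (some i) ≠ 0)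
    (mp mm : ℕ)
    (hmp : mp = Nat.card {i : Fin m // 0 < f (some i)})
    (hmm : mm = Nat.card {i : Fin m // f (some i) < 0})
    (hmp0 : 0 < mp) (hmm0 : 0 < mm) (hsum : mp + mm = n - 1) :
    UN (_root_.starGraph m) f = 1 + min mp mm :=
  stmt_3_general m f hc hl mp mm hmp hmm
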